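/- arXiv:1705.00772 — 3 statements merged into one kernel-verified Lean document; each statement's English description precedes it below -/
import Mathlib

section
/- The exponential cone K_exp, defined as the closure of { (x,y,z) : y > 0, z ≥ y·exp(x/y) }, equals { (x,y,z) : y > 0, z ≥ y·exp(x/y) } ∪ { (x,0,z) : x ≤ 0, z ≥ 0 }. -/
open Filter Topology Real

theorem expCone_closure_eq :
    closure {p : ℝ × ℝ × ℝ | 0 < p.2.1 ∧ p.2.1 * Real.exp (p.1 / p.2.1) ≤ p.2.2} =
      {p : ℝ × ℝ × ℝ | 0 < p.2.1 ∧ p.2.1 * Real.exp (p.1 / p.2.1) ≤ p.2.2} ∪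
        {p : ℝ × ℝ × ℝ | p.2.1 = 0 ∧ p.1 ≤ 0 ∧ 0 ≤ p.2.2} := by
  apply Set.Subset.antisymm
  · intro p hp
    rw [mem_closure_iff_seq_limit] at hp
    obtain ⟨u, hu, hlim⟩ := hp
    have hx : Filter.Tendsto (fun n => (u n).1) atTop (𝓝 p.1) :=
      ((continuous_fst.tendsto p).comp hlim)
    have hy : Filter.Tendsto (fun n => (u n).2.1) atTop (𝓝 p.2.1) :=
      (((continuous_fst.comp continuous_snd).tendsto p).comp hlim)
    have hz : Filter.Tendsto (fun n => (u n).2.2) atTop (𝓝 p.2.2) :=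
      (((continuous_snd.comp continuous_snd).tendsto p).comp hlim)
    have hy0 : 0 ≤ p.2.1 := ge_of_tendsto' hy (fun n => ((hu n).1).le)
    have hzn : ∀ n, 0 ≤ (u n).2.2 := by
      intro n
      have h1 := (hu n).1
      have h2 := (hu n).2
      have : 0 < (u n).2.1 * Real.exp ((u n).1 / (u n).2.1) := by positivity
      linarith
    have hz0 : 0 ≤ p.2.2 := ge_of_tendsto' hz hzn
    rcases eq_or_lt_of_le hy0 with h0 | hpos
    · right
      refine ⟨h0.symm, ?_, hz0⟩
      by_contra hxpos
      push_neg at hxpos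
      have E1 : ∀ᶠ n in atTop, p.1 / 2 < (u n).1 :=
        hx.eventually (eventually_gt_nhds (by linarith))
      have E2 : ∀ᶠ n in atTop, (u n).2.2 < p.2.2 + 1 :=
        hz.eventually (eventually_lt_nhds (by linarith))
      have hb : (0:ℝ) < p.1 ^ 2 / (16 * (p.2.2 + 1)) := by positivity
      have E3 : ∀ᶠ n in atTop, (u n).2.1 < p.1 ^ 2 / (16 * (p.2.2 + 1)) := by
        have := hy.eventually (eventually_lt_nhds (by rw [← h0]; exact hb))
        exact this
      obtain ⟨n, h1, h2, h3⟩ := (E1.and (E2.and E3)).exists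
      have hyn : 0 < (u n).2.1 := (hu n).1
      have hzn' := (hu n).2
      set t := (u n).1 / (u n).2.1 with ht
      have ht0 : 0 < t := div_pos (by linarith) hyn
      have hexp : t ^ 2 / 4 ≤ Real.exp t := by
        have h4 : Real.exp t = Real.exp (t / 2) * Real.exp (t / 2) := by
          rw [← Real.exp_add]; ring_nf
        have h5 : t / 2 + 1 ≤ Real.exp (t / 2) := Real.add_one_le_exp _
        nlinarith [Real.exp_pos (t / 2)]
      have key : (u n).1 ^ 2 / (4 * (u n).2.1) ≤ (u n).2.2 := by
        have : (u n).2.1 * (t ^ 2 / 4) ≤ (u n).2.1 * Real.exp t :=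
          mul_le_mul_of_nonneg_left hexp hyn.le
        have heq : (u n).2.1 * (t ^ 2 / 4) = (u n).1 ^ 2 / (4 * (u n).2.1) := by
          rw [ht]; field_simp
        linarith [heq ▸ this]
      have key2 : (u n).1 ^ 2 ≤ 4 * (u n).2.1 * (u n).2.2 := by
        rw [div_le_iff₀ (by positivity)] at key
        linarith [key]
      have hpz : (0:ℝ) < p.2.2 + 1 := by linarith
      have h3' : (u n).2.1 * (p.2.2 + 1) < p.1 ^ 2 / 16 := by
        have h := mul_lt_mul_of_pos_right h3 hpz
        have heq : p.1 ^ 2 / (16 * (p.2.2 + 1)) * (p.2.2 + 1) = p.1 ^ 2 / 16 := by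
          field_simp
        linarith [heq ▸ h]
      have h4 : 4 * (u n).2.1 * (u n).2.2 < 4 * ((u n).2.1 * (p.2.2 + 1)) := by
        have := mul_lt_mul_of_pos_left h2 (show (0:ℝ) < 4 * (u n).2.1 by positivity)
        linarith [this]
      have h5 : p.1 ^ 2 / 4 < (u n).1 ^ 2 := by nlinarith
      linarith
    · left
      refine ⟨hpos, ?_⟩
      have hcont : Filter.Tendsto
          (fun n => (u n).2.1 * Real.exp ((u n).1 / (u n).2.1))
          atTop (𝓝 (p.2.1 * Real.exp (p.1 / p.2.1))) :=
        hy.mul ((Real.continuous_exp.tendsto _).comp (hx.div hy hpos.ne'))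
      exact le_of_tendsto_of_tendsto' hcont hz fun n => (hu n).2
  · rintro ⟨x, y, z⟩ (hp | ⟨hy, hx, hz⟩)
    · exact subset_closure hp
    · rw [mem_closure_iff_seq_limit]
      refine ⟨fun n => (x, 1 / (n + 1 : ℝ), z + 1 / (n + 1 : ℝ)), ?_, ?_⟩
      · intro n
        have hn : (0:ℝ) < 1 / (n + 1 : ℝ) := by positivity
        refine ⟨hn, ?_⟩
        have : Real.exp (x / (1 / (n + 1 : ℝ))) ≤ 1 := by
          rw [Real.exp_le_one_iff]
          exact div_nonpos_of_nonpos_of_nonneg hx hn.le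
        calc (1 / (n + 1 : ℝ)) * Real.exp (x / (1 / (n + 1 : ℝ)))
            ≤ (1 / (n + 1 : ℝ)) * 1 := by
              exact mul_le_mul_of_nonneg_left this hn.le
          _ ≤ z + 1 / (n + 1 : ℝ) := by linarith
      · subst hy
        have h1 : Filter.Tendsto (fun n : ℕ => 1 / (n + 1 : ℝ)) atTop (𝓝 0) :=
          tendsto_one_div_add_atTop_nhds_zero_nat
        have h2 : Filter.Tendsto (fun n : ℕ => z + 1 / (n + 1 : ℝ)) atTop (𝓝 z) := by
          have := (tendsto_const_nhds (x := z) (f := atTop (α := ℕ))).add h1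
          simpa using this
        exact tendsto_const_nhds.prodMk_nhds (h1.prodMk_nhds h2)
end

section
/- If (u*, v*) solves the homogeneous self-dual embedding, i.e., Qu* = v*, u* ∈ C, v* ∈ C*, where u* = (x*, y*, τ*), v* = (r*, s*, κ*), with τ* > 0 and κ* = 0, then (x*/τ*, s*/τ*) is feasible for the primal cone program, i.e., A(x*/τ*) + s*/τ* = b and s*/τ* ∈ K, and the stationarity condition Aᵀ(y*/τ*) = -c + r*/τ* is satisfied with r* = 0. -/
open Matrix

theorem embedding_solution_primal_feasible {m n : ℕ}
    (A : Matrix (Fin m) (Fin n) ℝ) (b : Fin m → ℝ) (c : Fin n → ℝ)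
    (K : Set (Fin m → ℝ)) (hK : ∀ w ∈ K, ∀ t : ℝ, 0 ≤ t → t • w ∈ K)
    (x : Fin n → ℝ) (y : Fin m → ℝ) (τ : ℝ)
    (r : Fin n → ℝ) (s : Fin m → ℝ) (κ : ℝ)
    (h1 : Aᵀ *ᵥ y + τ • c = r)
    (h2 : -(A *ᵥ x) + τ • b = s)
    (hr : r = 0) (hs : s ∈ K) (hτ : 0 < τ) (hκ : κ = 0) :
    A *ᵥ (τ⁻¹ • x) + τ⁻¹ • s = b ∧ τ⁻¹ • s ∈ K ∧
      Aᵀ *ᵥ (τ⁻¹ • y) + c = τ⁻¹ • r := by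
  have hτ' : τ ≠ 0 := ne_of_gt hτ
  refine ⟨?_, hK s hs τ⁻¹ (by positivity), ?_⟩
  · rw [Matrix.mulVec_smul]
    have := congrArg (fun v => τ⁻¹ • v) h2
    simp only [smul_add, smul_neg, smul_smul, inv_mul_cancel₀ hτ', one_smul] at this
    rw [← this]; abel
  · rw [Matrix.mulVec_smul]
    have := congrArg (fun v => τ⁻¹ • v) h1
    simp only [smul_add, smul_smul, inv_mul_cancel₀ hτ', one_smul] at this
    rw [← this]
end

section
/- The lasso ADMM fixed-point characterization: z = (θ, κ, μ) satisfies F(z) = 0, where F(z) = ((XᵀX + ρI)θ - (Xᵀy + ρ(κ - μ)), κ - S_{λ/ρ}(θ + μ), κ - θ), if and only if θ = κ, θ = S_{λ/ρ}(θ + μ), and XᵀXθ - Xᵀy = -ρμ; in that case, -ρμ ∈ -Xᵀ(y - Xθ) and θ minimizes (1/2)‖y - Xθ‖₂² + λ‖θ‖₁. -/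
open Matrix

noncomputable def softThresh {p : ℕ} (t : ℝ) (v : Fin p → ℝ) : Fin p → ℝ :=
  fun i => Real.sign (v i) * max (|v i| - t) 0

lemma sign_mul_self' {x : ℝ} (hx : x ≠ 0) : Real.sign x * x = |x| := by
  rcases lt_trichotomy x 0 with h|h|h
  · rw [Real.sign_of_neg h, abs_of_neg h]; ring
  · exact absurd h hx
  · rw [Real.sign_of_pos h, abs_of_pos h]; ring

lemma soft_aux (t s a : ℝ) (ht : 0 ≤ t)
    (h : a = Real.sign s * max (|s| - t) 0) :
    |s - a| ≤ t ∧ (a ≠ 0 → s - a = t * Real.sign a) := by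
  rcases lt_trichotomy s 0 with hs | hs | hs
  · rw [Real.sign_of_neg hs, abs_of_neg hs] at h
    rcases le_or_gt (-s - t) 0 with h1 | h1
    · rw [max_eq_right h1] at h
      simp only [mul_zero] at h
      subst h
      refine ⟨?_, ?_⟩
      · rw [sub_zero, abs_of_neg hs]; linarith
      · intro hne; exact absurd rfl hne
    · rw [max_eq_left h1.le] at h
      have ha : a = s + t := by rw [h]; ring
      have haneg : a < 0 := by linarith
      refine ⟨?_, ?_⟩
      · rw [ha]; simp [abs_of_nonneg ht]
      · intro _; rw [Real.sign_of_neg haneg, ha]; ring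
  · subst hs
    simp only [Real.sign_zero, zero_mul] at h
    subst h
    simp [ht]
  · rw [Real.sign_of_pos hs, abs_of_pos hs] at h
    rcases le_or_gt (s - t) 0 with h1 | h1
    · rw [max_eq_right h1] at h
      simp only [mul_zero] at h
      subst h
      refine ⟨?_, ?_⟩
      · rw [sub_zero, abs_of_pos hs]; linarith
      · intro hne; exact absurd rfl hne
    · rw [max_eq_left h1.le] at h
      have ha : a = s - t := by rw [h]; ring
      have hapos : 0 < a := by linarith
      refine ⟨?_, ?_⟩
      · rw [ha]; simp [abs_of_nonneg ht]
      · intro _; rw [Real.sign_of_pos hapos, ha]; ring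

lemma coord_ineq (lam m a b : ℝ) (hlam : 0 ≤ lam) (h1 : |m| ≤ lam)
    (h2 : a ≠ 0 → m = lam * Real.sign a) :
    lam * |a| + m * (b - a) ≤ lam * |b| := by
  by_cases ha : a = 0
  · subst ha
    simp only [abs_zero, mul_zero, zero_add, sub_zero]
    calc m * b ≤ |m * b| := le_abs_self _
      _ = |m| * |b| := abs_mul _ _
      _ ≤ lam * |b| := mul_le_mul_of_nonneg_right h1 (abs_nonneg b)
  · rw [h2 ha]
    have hsa : Real.sign a * a = |a| := sign_mul_self' ha
    have hsb : Real.sign a * b ≤ |b| := by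
      rcases lt_trichotomy a 0 with h|h|h
      · rw [Real.sign_of_neg h]; simpa using neg_le_abs b
      · exact absurd h ha
      · rw [Real.sign_of_pos h]; simpa using le_abs_self b
    nlinarith [mul_le_mul_of_nonneg_left hsb hlam]

theorem lasso_admm_fixed_point {N p : ℕ}
    (X : Matrix (Fin N) (Fin p) ℝ) (y : Fin N → ℝ) (lam ρ : ℝ)
    (hlam : 0 ≤ lam) (hρ : 0 < ρ) (θ κ μ : Fin p → ℝ) :
    (((Xᵀ * X) *ᵥ θ + ρ • θ - (Xᵀ *ᵥ y + ρ • (κ - μ)) = 0 ∧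
        κ - softThresh (lam / ρ) (θ + μ) = 0 ∧ κ - θ = 0) ↔
      (θ = κ ∧ θ = softThresh (lam / ρ) (θ + μ) ∧
        (Xᵀ * X) *ᵥ θ - Xᵀ *ᵥ y = -(ρ • μ))) ∧
    (((Xᵀ * X) *ᵥ θ + ρ • θ - (Xᵀ *ᵥ y + ρ • (κ - μ)) = 0 ∧
        κ - softThresh (lam / ρ) (θ + μ) = 0 ∧ κ - θ = 0) →
      (Xᵀ *ᵥ (X *ᵥ θ - y) + ρ • μ = 0 ∧
        (∀ i, |ρ * μ i| ≤ lam ∧ (θ i ≠ 0 → ρ * μ i = lam * Real.sign (θ i))) ∧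
        (∀ θ' : Fin p → ℝ,
          (1 / 2) * ∑ j, (y j - (X *ᵥ θ) j) ^ 2 + lam * ∑ i, |θ i| ≤
            (1 / 2) * ∑ j, (y j - (X *ᵥ θ') j) ^ 2 + lam * ∑ i, |θ' i|))) := by
  have hiff : (((Xᵀ * X) *ᵥ θ + ρ • θ - (Xᵀ *ᵥ y + ρ • (κ - μ)) = 0 ∧
        κ - softThresh (lam / ρ) (θ + μ) = 0 ∧ κ - θ = 0) ↔
      (θ = κ ∧ θ = softThresh (lam / ρ) (θ + μ) ∧
        (Xᵀ * X) *ᵥ θ - Xᵀ *ᵥ y = -(ρ • μ))) := by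
    constructor
    · rintro ⟨h1, h2, h3⟩
      have hκ : κ = θ := sub_eq_zero.mp h3
      subst hκ
      refine ⟨rfl, sub_eq_zero.mp h2, ?_⟩
      funext i
      have h1i := congrFun h1 i
      simp only [Pi.sub_apply, Pi.add_apply, Pi.smul_apply, smul_eq_mul, Pi.zero_apply,
        Pi.neg_apply] at h1i ⊢
      nlinarith [h1i]
    · rintro ⟨h1, h2, h3⟩
      refine ⟨?_, by rw [← h1, ← h2]; exact sub_self θ, by rw [← h1]; exact sub_self θ⟩
      funext i
      have h3i := congrFun h3 i
      simp only [Pi.sub_apply, Pi.add_apply, Pi.smul_apply, smul_eq_mul, Pi.zero_apply,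
        Pi.neg_apply] at h3i ⊢
      rw [← h1]
      nlinarith [h3i]
  refine ⟨hiff, ?_⟩
  intro hF
  obtain ⟨hθκ, hsoft, hkey⟩ := hiff.mp hF
  -- key : Xᵀ *ᵥ (X *ᵥ θ - y) + ρ • μ = 0
  have hkey2 : Xᵀ *ᵥ (X *ᵥ θ - y) + ρ • μ = 0 := by
    have h' : Xᵀ *ᵥ (X *ᵥ θ - y) = (Xᵀ * X) *ᵥ θ - Xᵀ *ᵥ y := by
      rw [Matrix.mulVec_sub, Matrix.mulVec_mulVec]
    rw [h', hkey]
    simp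
  -- componentwise subgradient conditions
  have hcomp : ∀ i, |ρ * μ i| ≤ lam ∧ (θ i ≠ 0 → ρ * μ i = lam * Real.sign (θ i)) := by
    intro i
    have hi := congrFun hsoft i
    have := soft_aux (lam / ρ) (θ i + μ i) (θ i) (div_nonneg hlam hρ.le) hi
    have hμ : (θ i + μ i) - θ i = μ i := by ring
    rw [hμ] at this
    obtain ⟨ha, hb⟩ := this
    constructor
    · rw [abs_mul, abs_of_pos hρ]
      calc ρ * |μ i| ≤ ρ * (lam / ρ) := by
            exact mul_le_mul_of_nonneg_left ha hρ.le
        _ = lam := by field_simp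
    · intro hne
      rw [hb hne]
      field_simp
  refine ⟨hkey2, hcomp, ?_⟩
  -- minimization
  intro θ'
  set d : Fin p → ℝ := θ' - θ with hd
  have hgrad : Xᵀ *ᵥ (y - X *ᵥ θ) = ρ • μ := by
    have h' : Xᵀ *ᵥ (y - X *ᵥ θ) = -(Xᵀ *ᵥ (X *ᵥ θ - y)) := by
      rw [Matrix.mulVec_sub, Matrix.mulVec_sub, neg_sub]
    have e := eq_neg_of_add_eq_zero_left hkey2
    rw [h', e, neg_neg]
  have hdot : ∑ j, (y j - (X *ᵥ θ) j) * (X *ᵥ d) j = ∑ i, (ρ * μ i) * d i := by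
    have e1 : (y - X *ᵥ θ) ⬝ᵥ (X *ᵥ d) = (Xᵀ *ᵥ (y - X *ᵥ θ)) ⬝ᵥ d := by
      rw [Matrix.dotProduct_mulVec, Matrix.mulVec_transpose]
    have e2 : (y - X *ᵥ θ) ⬝ᵥ (X *ᵥ d) = ∑ j, (y j - (X *ᵥ θ) j) * (X *ᵥ d) j := by
      simp [dotProduct]
    have e3 : (Xᵀ *ᵥ (y - X *ᵥ θ)) ⬝ᵥ d = ∑ i, (ρ * μ i) * d i := by
      rw [hgrad]; simp [dotProduct, mul_comm]
    rw [← e2, e1, e3]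
  have hXθ' : ∀ j, (X *ᵥ θ') j = (X *ᵥ θ) j + (X *ᵥ d) j := by
    intro j
    have : X *ᵥ θ' = X *ᵥ θ + X *ᵥ d := by
      rw [← Matrix.mulVec_add]
      congr 1
      simp [hd]
    rw [this, Pi.add_apply]
  -- expand the quadratic
  have hquad : ∑ j, (y j - (X *ᵥ θ') j) ^ 2 =
      ∑ j, (y j - (X *ᵥ θ) j) ^ 2 - 2 * ∑ j, (y j - (X *ᵥ θ) j) * (X *ᵥ d) j
        + ∑ j, ((X *ᵥ d) j) ^ 2 := by
    have e : ∀ j, (y j - (X *ᵥ θ') j) ^ 2 =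
        (y j - (X *ᵥ θ) j) ^ 2 - 2 * ((y j - (X *ᵥ θ) j) * (X *ᵥ d) j)
          + ((X *ᵥ d) j) ^ 2 := by
      intro j; rw [hXθ' j]; ring
    simp_rw [e]
    rw [Finset.sum_add_distrib, Finset.sum_sub_distrib, ← Finset.mul_sum]
  have habs : lam * ∑ i, |θ i| + ∑ i, (ρ * μ i) * d i ≤ lam * ∑ i, |θ' i| := by
    rw [Finset.mul_sum, Finset.mul_sum, ← Finset.sum_add_distrib]
    apply Finset.sum_le_sum
    intro i _
    have := coord_ineq lam (ρ * μ i) (θ i) (θ' i) hlam (hcomp i).1 (hcomp i).2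
    have hdi : d i = θ' i - θ i := by simp [hd]
    rw [hdi]
    linarith
  have hsq : 0 ≤ ∑ j, ((X *ᵥ d) j) ^ 2 :=
    Finset.sum_nonneg fun j _ => sq_nonneg _
  rw [hquad]
  nlinarith [habs, hsq, hdot]
end
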